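/- arXiv:2405.15350 — 7 statements merged into one kernel-verified Lean document; each statement's English description precedes it below -/
import Mathlib

section
/- Let X be a biquandle. For each n, define d_n: C_n → C_{n−1} on the free abelian group C_n generated by n-tuples of elements of X by d_n(x_1,…,x_n) = Σ_{i=1}^n (−1)^i [(x_1,…,x_{i−1},x_{i+1},…,x_n) − (x_1∗x_i,…,x_{i−1}∗x_i, x_{i+1}∘x_i,…,x_n∘x_i)], with d_n = 0 for n ≤ 1. Then d_{n−1} ∘ d_n = 0, so (C_n, d_n) is a chain complex. -/
/-- A biquandle: a set with two binary operations `ast` (∗) and `circ` (∘)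
satisfying the three biquandle axioms. -/
structure Biquandle (X : Type*) where
  ast : X → X → X
  circ : X → X → X
  diag : ∀ x, ast x x = circ x x
  ast_bij : ∀ x, Function.Bijective (fun z => ast z x)
  circ_bij : ∀ x, Function.Bijective (fun w => circ w x)
  S_bij : Function.Bijective (fun p : X × X => (circ p.2 p.1, ast p.1 p.2))
  ex1 : ∀ x y z, circ (circ z y) (ast x y) = circ (circ z x) (circ y x)
  ex2 : ∀ x y z, ast (circ y x) (circ z x) = circ (ast y z) (ast x z)
  ex3 : ∀ x y z, ast (ast x y) (circ z y) = ast (ast x z) (ast y z)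


/-- The birack boundary map `d_{n+1}` from the free abelian group on (n+1)-tuples
of X to the free abelian group on n-tuples:
d(x_1,…,x_{n+1}) = Σ_i (−1)^i [(…,x_{i−1},x_{i+1},…) − (x_1∗x_i,…,x_{i−1}∗x_i, x_{i+1}∘x_i,…)].
(For n = 0 this is 0, matching d_n = 0 for n ≤ 1.) -/
noncomputable def birackD {X : Type*} (B : Biquandle X) (n : ℕ) :
    ((Fin (n + 1) → X) →₀ ℤ) →ₗ[ℤ] ((Fin n → X) →₀ ℤ) :=
  Finsupp.lift _ ℤ _ (fun x : Fin (n + 1) → X =>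
    ∑ i : Fin (n + 1), ((-1 : ℤ) ^ ((i : ℕ) + 1)) •
      (Finsupp.single (fun j : Fin n => x (i.succAbove j)) 1 -
       Finsupp.single (fun j : Fin n =>
         if (j : ℕ) < (i : ℕ) then B.ast (x (i.succAbove j)) (x i)
         else B.circ (x (i.succAbove j)) (x i)) 1))

namespace BirackAux

variable {X : Type*}

/-- Unified face map: `ε = false` is the plain face, `ε = true` the twisted face. -/
def T (B : Biquandle X) {m : ℕ} (ε : Bool) (i : Fin (m + 1)) (x : Fin (m + 1) → X) :
    Fin m → X := fun j =>
  if ε then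
    (if (j : ℕ) < (i : ℕ) then B.ast (x (i.succAbove j)) (x i)
     else B.circ (x (i.succAbove j)) (x i))
  else x (i.succAbove j)

lemma T_false (B : Biquandle X) {m : ℕ} (i : Fin (m + 1)) (x : Fin (m + 1) → X) :
    T B false i x = fun j => x (i.succAbove j) := rfl

lemma T_true (B : Biquandle X) {m : ℕ} (i : Fin (m + 1)) (x : Fin (m + 1) → X) :
    T B true i x = fun j : Fin m =>
      if (j : ℕ) < (i : ℕ) then B.ast (x (i.succAbove j)) (x i)
      else B.circ (x (i.succAbove j)) (x i) := rfl

lemma coe_succAbove {m : ℕ} (i : Fin (m + 1)) (l : Fin m) :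
    ((i.succAbove l : Fin (m + 1)) : ℕ) =
      if (l : ℕ) < (i : ℕ) then (l : ℕ) else (l : ℕ) + 1 := by
  rw [Fin.succAbove]
  rcases Nat.lt_or_ge (l : ℕ) (i : ℕ) with h | h
  · rw [if_pos (by simpa [Fin.lt_def] using h), if_pos h]; rfl
  · rw [if_neg (by simp [Fin.lt_def]; omega), if_neg (by omega)]; rfl

lemma T_swap (B : Biquandle X) {n : ℕ} (x : Fin (n + 2) → X) (ε δ : Bool)
    (i : Fin (n + 2)) (j : Fin (n + 1)) (i' : Fin (n + 1)) (j' : Fin (n + 2))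
    (hij : (j : ℕ) < (i : ℕ)) (hi' : (i' : ℕ) = (i : ℕ) - 1)
    (hj' : (j' : ℕ) = (j : ℕ)) :
    T B δ j (T B ε i x) = T B ε i' (T B δ j' x) := by
  have hi : (i : ℕ) ≤ n + 1 := Nat.lt_succ_iff.mp i.isLt
  funext l
  have h2 : i.succAbove j = j' := by
    apply Fin.ext; rw [coe_succAbove, if_pos hij, hj']
  have h3 : j'.succAbove i' = i := by
    apply Fin.ext; rw [coe_succAbove]; rw [hi', hj']
    rw [if_neg (by omega)]; omega
  have h1 : i.succAbove (j.succAbove l) = j'.succAbove (i'.succAbove l) := by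
    apply Fin.ext
    simp only [coe_succAbove, hi', hj']
    split_ifs <;> omega
  simp only [T, h1, h2, h3]
  have hm := coe_succAbove j l
  have hm' := coe_succAbove i' l
  cases ε <;> cases δ <;>
    simp only [if_true, if_false, Bool.false_eq_true, Bool.true_eq_false] <;>
    simp only [hi'] at hm' <;>
    simp only [hm, hm', hi', hj'] <;>
    split_ifs <;>
    first
      | rfl
      | (exfalso; omega)
      | exact B.ex1 _ _ _
      | exact (B.ex1 _ _ _).symm
      | exact B.ex2 _ _ _
      | exact (B.ex2 _ _ _).symm
      | exact B.ex3 _ _ _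
      | exact (B.ex3 _ _ _).symm


lemma birackD_single (B : Biquandle X) {n : ℕ} (x : Fin (n + 1) → X) :
    birackD B n (Finsupp.single x 1) =
      ∑ i : Fin (n + 1), ∑ ε : Bool,
        ((-1 : ℤ) ^ ((i : ℕ) + 1) * (cond ε (-1) 1)) • Finsupp.single (T B ε i x) 1 := by
  rw [birackD, Finsupp.lift_apply, Finsupp.sum_single_index (by simp), one_smul]
  refine Finset.sum_congr rfl fun i _ => ?_
  rw [Fintype.sum_bool]
  simp only [T_false, T_true, cond_true, cond_false, mul_neg_one, mul_one, neg_smul, smul_sub]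
  rw [sub_eq_neg_add]

lemma s_cancel1 (a b : ℕ) (hb : 1 ≤ b) (c d : ℤ) :
    ((-1 : ℤ) ^ (b + 1) * c) * ((-1 : ℤ) ^ (a + 1) * d) +
      ((-1 : ℤ) ^ (a + 1) * d) * ((-1 : ℤ) ^ (b - 1 + 1) * c) = 0 := by
  rw [Nat.sub_add_cancel hb, pow_succ]; ring

lemma s_cancel2 (a b : ℕ) (c d : ℤ) :
    ((-1 : ℤ) ^ (b + 1) * c) * ((-1 : ℤ) ^ (a + 1) * d) +
      ((-1 : ℤ) ^ (a + 1 + 1) * d) * ((-1 : ℤ) ^ (b + 1) * c) = 0 := by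
  rw [pow_succ _ (a + 1)]; ring

lemma key (B : Biquandle X) {n : ℕ} (x : Fin (n + 2) → X) :
    birackD B n (birackD B (n + 1) (Finsupp.single x 1)) = 0 := by
  rw [birackD_single, map_sum]
  have step : ∀ i : Fin (n + 2),
      birackD B n (∑ ε : Bool,
          ((-1 : ℤ) ^ ((i : ℕ) + 1) * (cond ε (-1) 1)) • Finsupp.single (T B ε i x) 1) =
        ∑ ε : Bool, ∑ j : Fin (n + 1), ∑ δ : Bool,
          (((-1 : ℤ) ^ ((i : ℕ) + 1) * (cond ε (-1) 1)) *
            ((-1 : ℤ) ^ ((j : ℕ) + 1) * (cond δ (-1) 1))) •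
            Finsupp.single (T B δ j (T B ε i x)) 1 := by
    intro i
    rw [map_sum]
    refine Finset.sum_congr rfl fun ε _ => ?_
    rw [map_smul, birackD_single, Finset.smul_sum]
    refine Finset.sum_congr rfl fun j _ => ?_
    rw [Finset.smul_sum]
    exact Finset.sum_congr rfl fun δ _ => (smul_smul _ _ _)
  rw [Finset.sum_congr rfl fun i _ => step i]
  have flatten :
      (∑ i : Fin (n + 2), ∑ ε : Bool, ∑ j : Fin (n + 1), ∑ δ : Bool,
        (((-1 : ℤ) ^ ((i : ℕ) + 1) * (cond ε (-1) 1)) *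
          ((-1 : ℤ) ^ ((j : ℕ) + 1) * (cond δ (-1) 1))) •
            (Finsupp.single (T B δ j (T B ε i x)) 1 : (Fin n → X) →₀ ℤ))
      = ∑ p : Fin (n + 2) × Bool × Fin (n + 1) × Bool,
        (((-1 : ℤ) ^ ((p.1 : ℕ) + 1) * (cond p.2.1 (-1) 1)) *
          ((-1 : ℤ) ^ ((p.2.2.1 : ℕ) + 1) * (cond p.2.2.2 (-1) 1))) •
            (Finsupp.single (T B p.2.2.2 p.2.2.1 (T B p.2.1 p.1 x)) 1 : (Fin n → X) →₀ ℤ) := by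
    rw [Fintype.sum_prod_type]
    refine Finset.sum_congr rfl fun i _ => ?_
    rw [Fintype.sum_prod_type]
    refine Finset.sum_congr rfl fun ε _ => ?_
    rw [Fintype.sum_prod_type]
  rw [flatten]
  refine Finset.sum_ninvolution
    (fun p => if h : (p.2.2.1 : ℕ) < (p.1 : ℕ) then
        (⟨(p.2.2.1 : ℕ), by have := p.2.2.1.isLt; omega⟩, p.2.2.2,
          ⟨(p.1 : ℕ) - 1, by have := p.1.isLt; omega⟩, p.2.1)
      else
        (⟨(p.2.2.1 : ℕ) + 1, by have := p.2.2.1.isLt; omega⟩, p.2.2.2,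
          ⟨(p.1 : ℕ), by have := p.2.2.1.isLt; omega⟩, p.2.1))
    ?_ ?_ (fun _ => Finset.mem_univ _) ?_
  · rintro ⟨i, ε, j, δ⟩
    by_cases h : (j : ℕ) < (i : ℕ)
    · simp only [dif_pos h]
      rw [T_swap B x ε δ i j ⟨(i : ℕ) - 1, by have := i.isLt; omega⟩
        ⟨(j : ℕ), by have := j.isLt; omega⟩ h rfl rfl, ← add_smul]
      convert zero_smul ℤ _ using 2
      exact s_cancel1 (j : ℕ) (i : ℕ) (by omega) _ _
    · simp only [dif_neg h]
      rw [T_swap B x δ ε ⟨(j : ℕ) + 1, by have := j.isLt; omega⟩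
        ⟨(i : ℕ), by have := j.isLt; omega⟩ j i (by simp only [Fin.val_mk]; omega)
        (by simp only [Fin.val_mk]; omega) rfl, ← add_smul]
      convert zero_smul ℤ _ using 2
      exact s_cancel2 (j : ℕ) (i : ℕ) _ _
  · rintro ⟨i, ε, j, δ⟩ - hc
    dsimp only at hc
    by_cases h : (j : ℕ) < (i : ℕ)
    · rw [dif_pos h] at hc
      have h1 := congrArg (fun q : Fin (n + 2) × Bool × Fin (n + 1) × Bool => (q.1 : ℕ)) hc
      simp only [Fin.val_mk] at h1
      omega
    · rw [dif_neg h] at hc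
      have h1 := congrArg (fun q : Fin (n + 2) × Bool × Fin (n + 1) × Bool => (q.1 : ℕ)) hc
      simp only [Fin.val_mk] at h1
      omega
  · rintro ⟨i, ε, j, δ⟩
    dsimp only
    by_cases h : (j : ℕ) < (i : ℕ)
    · rw [dif_pos h, dif_neg (by simp only [Fin.val_mk]; omega)]
      refine Prod.ext ?_ (Prod.ext rfl (Prod.ext ?_ rfl)) <;>
        apply Fin.ext <;> simp only [Fin.val_mk] <;> omega
    · rw [dif_neg h, dif_pos (by simp only [Fin.val_mk]; omega)]
      refine Prod.ext ?_ (Prod.ext rfl (Prod.ext ?_ rfl)) <;>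
        apply Fin.ext <;> simp only [Fin.val_mk] <;> omega

end BirackAux

/-- d ∘ d = 0: the birack chain groups form a chain complex. -/
theorem birackD_comp_birackD {X : Type*} (B : Biquandle X) (n : ℕ) :
    (birackD B n) ∘ₗ (birackD B (n + 1)) = 0 := by
  apply Finsupp.lhom_ext
  intro a b
  rw [LinearMap.comp_apply, LinearMap.zero_apply]
  have hb : (Finsupp.single a b : (Fin (n + 2) → X) →₀ ℤ) = b • Finsupp.single a 1 := by
    rw [Finsupp.smul_single, smul_eq_mul, mul_one]
  rw [hb, map_smul, map_smul, BirackAux.key, smul_zero]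
end

section
/- Let X be a biquandle with boundary maps d_n as in the birack chain complex, and let C_n^{BD}(X) ⊆ C_n^{BR}(X) be the subgroup generated by n-tuples (x_1,…,x_n) with x_i = x_{i+1} for some 1 ≤ i ≤ n−1. Then d_n(C_n^{BD}(X)) ⊆ C_{n−1}^{BD}(X), i.e., the degenerate chains form a subcomplex. -/
/-- The subgroup of degenerate chains: generated by tuples having two equal
consecutive entries. -/
noncomputable def degenerate {X : Type*} (m : ℕ) : AddSubgroup ((Fin m → X) →₀ ℤ) :=
  AddSubgroup.closure {c | ∃ x : Fin m → X,
    (∃ i j : Fin m, (i : ℕ) + 1 = (j : ℕ) ∧ x i = x j) ∧ c = Finsupp.single x 1}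

private lemma succAbove_val' {n : ℕ} (i : Fin (n+1)) (j : Fin n) :
    ((i.succAbove j) : ℕ) = if (j:ℕ) < (i:ℕ) then (j:ℕ) else (j:ℕ)+1 := by
  unfold Fin.succAbove
  split_ifs with h1 h2 h2 <;> simp_all [Fin.lt_def]

private lemma sum_mem_of_pair {G : Type*} [AddCommGroup G] {m : ℕ} (H : AddSubgroup G)
    (f : Fin m → G) (k l : Fin m) (hne : k ≠ l) (hcancel : f k + f l = 0)
    (hmem : ∀ i, i ≠ k → i ≠ l → f i ∈ H) : ∑ i, f i ∈ H := by
  rw [← Finset.sum_sdiff (Finset.subset_univ {k, l}), Finset.sum_pair hne, hcancel, add_zero]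
  refine AddSubgroup.sum_mem _ fun i hi => ?_
  simp only [Finset.mem_sdiff, Finset.mem_insert, Finset.mem_singleton, not_or] at hi
  exact hmem i hi.2.1 hi.2.2

/-- The birack boundary map sends degenerate chains to degenerate chains:
the degenerate chains form a subcomplex. -/
theorem birackD_degenerate {X : Type*} (B : Biquandle X) (n : ℕ) :
    ∀ c ∈ degenerate (X := X) (n + 1), birackD B n c ∈ degenerate (X := X) n := by
  have hmain : ∀ x : Fin (n+1) → X,
      (∃ k l : Fin (n+1), (k:ℕ) + 1 = (l:ℕ) ∧ x k = x l) →
      birackD B n (Finsupp.single x 1) ∈ degenerate (X := X) n := by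
    rintro x ⟨k, l, hkl, hxkl⟩
    have hd : birackD B n (Finsupp.single x 1) =
        ∑ i : Fin (n + 1), ((-1 : ℤ) ^ ((i : ℕ) + 1)) •
          (Finsupp.single (fun j : Fin n => x (i.succAbove j)) 1 -
           Finsupp.single (fun j : Fin n =>
             if (j : ℕ) < (i : ℕ) then B.ast (x (i.succAbove j)) (x i)
             else B.circ (x (i.succAbove j)) (x i)) 1) := by
      simp [birackD, Finsupp.lift_apply, Finsupp.sum_single_index]
    rw [hd]
    have hln : (l:ℕ) < n + 1 := l.isLt
    have hkn : (k:ℕ) < n := by omega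
    have hne : k ≠ l := by intro h; rw [h] at hkl; omega
    refine sum_mem_of_pair _ _ k l hne ?_ ?_
    · -- cancellation of the two middle terms
      have hface : (fun j : Fin n => x (k.succAbove j)) = (fun j : Fin n => x (l.succAbove j)) := by
        funext j
        have h1 := succAbove_val' k j
        have h2 := succAbove_val' l j
        rcases lt_trichotomy (j:ℕ) (k:ℕ) with h | h | h
        · have : k.succAbove j = l.succAbove j := by
            apply Fin.ext; rw [h1, h2, if_pos h, if_pos (by omega)]
          rw [this]
        · have e1 : k.succAbove j = l := by apply Fin.ext; rw [h1, if_neg (by omega)]; omega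
          have e2 : l.succAbove j = k := by apply Fin.ext; rw [h2, if_pos (by omega)]; omega
          rw [e1, e2, hxkl]
        · have : k.succAbove j = l.succAbove j := by
            apply Fin.ext; rw [h1, h2, if_neg (by omega), if_neg (by omega)]
          rw [this]
      have htw : (fun j : Fin n =>
            if (j : ℕ) < (k : ℕ) then B.ast (x (k.succAbove j)) (x k)
            else B.circ (x (k.succAbove j)) (x k)) =
          (fun j : Fin n =>
            if (j : ℕ) < (l : ℕ) then B.ast (x (l.succAbove j)) (x l)
            else B.circ (x (l.succAbove j)) (x l)) := by
        funext j
        have h1 := succAbove_val' k j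
        have h2 := succAbove_val' l j
        rcases lt_trichotomy (j:ℕ) (k:ℕ) with h | h | h
        · have : k.succAbove j = l.succAbove j := by
            apply Fin.ext; rw [h1, h2, if_pos h, if_pos (by omega)]
          rw [if_pos h, if_pos (by omega : (j:ℕ) < (l:ℕ)), this, hxkl]
        · have e1 : k.succAbove j = l := by apply Fin.ext; rw [h1, if_neg (by omega)]; omega
          have e2 : l.succAbove j = k := by apply Fin.ext; rw [h2, if_pos (by omega)]; omega
          rw [if_neg (by omega), if_pos (by omega : (j:ℕ) < (l:ℕ)), e1, e2, hxkl,
            ← B.diag (x l)]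
        · have : k.succAbove j = l.succAbove j := by
            apply Fin.ext; rw [h1, h2, if_neg (by omega), if_neg (by omega)]
          rw [if_neg (by omega), if_neg (by omega), this, hxkl]
      rw [hface, htw]
      have hsign : ((-1 : ℤ) ^ ((l : ℕ) + 1)) = -((-1 : ℤ) ^ ((k : ℕ) + 1)) := by
        rw [← hkl]; ring
      rw [hsign, neg_smul, add_neg_cancel]
    · -- other terms are degenerate
      intro i hik hil
      have hik' : (i:ℕ) ≠ (k:ℕ) := fun h => hik (Fin.ext h)
      have hil' : (i:ℕ) ≠ (l:ℕ) := fun h => hil (Fin.ext h)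
      refine AddSubgroup.zsmul_mem _ (sub_mem ?_ ?_) _
      all_goals rcases lt_or_gt_of_ne hik' with hc | hc
      -- four goals: face with i < k; face with i > k (so i > l); twisted i < k; twisted i > l
      case inl =>
        refine AddSubgroup.subset_closure ⟨_, ⟨⟨(k:ℕ) - 1, by omega⟩, ⟨(k:ℕ), hkn⟩,
          by simp; omega, ?_⟩, rfl⟩
        have e1 : i.succAbove ⟨(k:ℕ) - 1, by omega⟩ = k := by
          apply Fin.ext; rw [succAbove_val', if_neg (by simp; omega)]; simp; omega
        have e2 : i.succAbove ⟨(k:ℕ), hkn⟩ = l := by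
          apply Fin.ext; rw [succAbove_val', if_neg (by simp; omega)]; simp; omega
        simp only [e1, e2, hxkl]
      case inr =>
        have hli : (l:ℕ) < (i:ℕ) := by omega
        refine AddSubgroup.subset_closure ⟨_, ⟨⟨(k:ℕ), hkn⟩, ⟨(l:ℕ), by omega⟩,
          by simp; omega, ?_⟩, rfl⟩
        have e1 : i.succAbove ⟨(k:ℕ), hkn⟩ = k := by
          apply Fin.ext; rw [succAbove_val', if_pos (by simp; omega)]
        have e2 : i.succAbove ⟨(l:ℕ), by omega⟩ = l := by
          apply Fin.ext; rw [succAbove_val', if_pos (by simp; omega)]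
        simp only [e1, e2, hxkl]
      case inl =>
        refine AddSubgroup.subset_closure ⟨_, ⟨⟨(k:ℕ) - 1, by omega⟩, ⟨(k:ℕ), hkn⟩,
          by simp; omega, ?_⟩, rfl⟩
        have e1 : i.succAbove ⟨(k:ℕ) - 1, by omega⟩ = k := by
          apply Fin.ext; rw [succAbove_val', if_neg (by simp; omega)]; simp; omega
        have e2 : i.succAbove ⟨(k:ℕ), hkn⟩ = l := by
          apply Fin.ext; rw [succAbove_val', if_neg (by simp; omega)]; simp; omega
        simp only [e1, e2, hxkl]
        rw [if_neg (by simp; omega), if_neg (by simp; omega)]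
      case inr =>
        have hli : (l:ℕ) < (i:ℕ) := by omega
        refine AddSubgroup.subset_closure ⟨_, ⟨⟨(k:ℕ), hkn⟩, ⟨(l:ℕ), by omega⟩,
          by simp; omega, ?_⟩, rfl⟩
        have e1 : i.succAbove ⟨(k:ℕ), hkn⟩ = k := by
          apply Fin.ext; rw [succAbove_val', if_pos (by simp; omega)]
        have e2 : i.succAbove ⟨(l:ℕ), by omega⟩ = l := by
          apply Fin.ext; rw [succAbove_val', if_pos (by simp; omega)]
        simp only [e1, e2, hxkl]
        rw [if_pos (by simp; omega), if_pos (by simp; omega)]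
  intro c hc
  refine AddSubgroup.closure_induction ?_ ?_ ?_ ?_ hc
  · rintro c ⟨x, hx, rfl⟩; exact hmain x hx
  · rw [map_zero]; exact zero_mem _
  · intro a b _ _ ha hb; rw [map_add]; exact add_mem ha hb
  · intro a _ ha; rw [map_neg]; exact neg_mem ha
end

section
/- Let X be a biquandle, f an automorphism satisfying x∗y = x∘f(y) for all x,y, A an abelian group, and ψ: X → A any map. Define the coboundary φ(x,y) = ψ(y)^{-1}·ψ(y∘x)·ψ(x)·ψ(x∗y)^{-1}. If φ additionally satisfies φ(x,y)·φ(y, f^{-1}(x)) = 1 for all x,y, then ψ(x)·ψ(f^{-1}(x))^{-1} = ψ(x∗y)·ψ(f^{-1}(x)∘y)^{-1} for all x,y ∈ X. -/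
/-- If the coboundary φ(x,y) = ψ(y)⁻¹ψ(y∘x)ψ(x)ψ(x∗y)⁻¹ of a 1-cochain ψ
satisfies φ(x,y)φ(y,f⁻¹(x)) = 1, then
ψ(x)ψ(f⁻¹(x))⁻¹ = ψ(x∗y)ψ(f⁻¹(x)∘y)⁻¹ for all x,y. -/
theorem coboundary_identity {X : Type*} {A : Type*} [CommGroup A]
    (B : Biquandle X) (f : X ≃ X)
    (hast : ∀ x y, f (B.ast x y) = B.ast (f x) (f y))
    (hcirc : ∀ x y, f (B.circ x y) = B.circ (f x) (f y))
    (hcond : ∀ x y, B.ast x y = B.circ x (f y))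
    (ψ : X → A) (φ : X → X → A)
    (hφ : ∀ x y, φ x y = (ψ y)⁻¹ * ψ (B.circ y x) * ψ x * (ψ (B.ast x y))⁻¹)
    (hcob : ∀ x y, φ x y * φ y (f.symm x) = 1) :
    ∀ x y : X, ψ x * (ψ (f.symm x))⁻¹ = ψ (B.ast x y) * (ψ (B.circ (f.symm x) y))⁻¹ := by
  intro x y
  have key := hcob x y
  rw [hφ, hφ, hcond y (f.symm x), f.apply_symm_apply] at key
  have h : ψ x * (ψ (f.symm x))⁻¹ * (ψ (B.ast x y) * (ψ (B.circ (f.symm x) y))⁻¹)⁻¹ = 1 := by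
    rw [← key]
    simp [mul_assoc, mul_comm, mul_left_comm]
  rw [mul_inv_eq_one] at h
  exact h
end

section
/- Let X be a finite semi-Latin biquandle (for every x, the map y ↦ x∗y is bijective, or for every x the map y ↦ x∘y is bijective), f an automorphism with x∗y = x∘f(y) for all x,y, A an abelian group, and ψ: X → A a map whose coboundary φ(x,y) = ψ(y)^{-1}ψ(y∘x)ψ(x)ψ(x∗y)^{-1} satisfies φ(x,y)φ(y,f^{-1}(x)) = 1 for all x,y. Then the quantity ψ(f(x))·ψ(x)^{-1} is constant, i.e., ψ(f(x))ψ(x)^{-1} = ψ(f(y))ψ(y)^{-1} for all x,y ∈ X. -/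
theorem aux_cancel {A : Type*} [CommGroup A] (a b c d e g : A)
    (h : a⁻¹ * b * c * d⁻¹ * (e⁻¹ * g * a * b⁻¹) = 1) : g * d⁻¹ = e * c⁻¹ := by
  have hh := congrArg Additive.ofMul h
  have goal : Additive.ofMul (g * d⁻¹) = Additive.ofMul (e * c⁻¹) := by
    simp only [ofMul_mul, ofMul_inv, ofMul_one] at hh ⊢
    abel_nf at hh ⊢
    rw [← sub_eq_zero, ← hh]
    abel
  exact goal

/-- For a finite semi-Latin biquandle (all left translations by ∗, or all left
translations by ∘, are bijective), an automorphism f with x∗y = x∘f(y), and a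
1-cochain ψ whose coboundary satisfies φ(x,y)φ(y,f⁻¹(x)) = 1, the quantity
ψ(f(x))·ψ(x)⁻¹ is constant on X. -/
theorem semiLatin_constant {X : Type*} [Finite X] {A : Type*} [CommGroup A]
    (B : Biquandle X)
    (hsl : (∀ x, Function.Bijective (fun y => B.ast x y)) ∨
           (∀ x, Function.Bijective (fun y => B.circ x y)))
    (f : X ≃ X)
    (hast : ∀ x y, f (B.ast x y) = B.ast (f x) (f y))
    (hcirc : ∀ x y, f (B.circ x y) = B.circ (f x) (f y))
    (hcond : ∀ x y, B.ast x y = B.circ x (f y))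
    (ψ : X → A) (φ : X → X → A)
    (hφ : ∀ x y, φ x y = (ψ y)⁻¹ * ψ (B.circ y x) * ψ x * (ψ (B.ast x y))⁻¹)
    (hcob : ∀ x y, φ x y * φ y (f.symm x) = 1) :
    ∀ x y : X, ψ (f x) * (ψ x)⁻¹ = ψ (f y) * (ψ y)⁻¹ := by
  -- key: h(x∗y) = h(x) where h z = ψ(f⁻¹ z) * (ψ z)⁻¹
  have key : ∀ x y, ψ (f.symm (B.ast x y)) * (ψ (B.ast x y))⁻¹
      = ψ (f.symm x) * (ψ x)⁻¹ := by
    intro x y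
    have e1 : B.ast y (f.symm x) = B.circ y x := by
      rw [hcond y (f.symm x), f.apply_symm_apply]
    have e2 : B.circ (f.symm x) y = f.symm (B.ast x y) := by
      apply f.injective
      rw [hcirc, f.apply_symm_apply, f.apply_symm_apply, ← hcond]
    have eq := hcob x y
    rw [hφ x y, hφ y (f.symm x), e1, e2] at eq
    exact aux_cancel (ψ y) (ψ (B.circ y x)) (ψ x) (ψ (B.ast x y)) (ψ (f.symm x))
      (ψ (f.symm (B.ast x y))) eq
  -- every x has the map y ↦ x∗y bijective
  have hast_bij : ∀ x, Function.Surjective (fun y => B.ast x y) := by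
    rcases hsl with h | h
    · exact fun x => (h x).surjective
    · intro x
      have : (fun y => B.ast x y) = (fun y => B.circ x y) ∘ f := by
        funext y; exact hcond x y
      rw [this]
      exact ((h x).surjective).comp f.surjective
  -- h is constant
  have hconst : ∀ x z, ψ (f.symm z) * (ψ z)⁻¹ = ψ (f.symm x) * (ψ x)⁻¹ := by
    intro x z
    obtain ⟨y, hy⟩ := hast_bij x z
    rw [← hy]
    exact key x y
  intro x y
  have h1 := hconst (f x) (f y)
  rw [f.symm_apply_apply, f.symm_apply_apply] at h1
  have := congrArg (·⁻¹) h1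
  simpa [mul_inv_rev, mul_comm] using this.symm
end

section
/- Let X be a biquandle and f an automorphism with x∗y = x∘f(y) for all x,y. Suppose that for fixed y the maps x ↦ x∗y and x ↦ x∘y are bijections, with inverses written x ↦ x∗^{-1}y and x ↦ x∘^{-1}y. In the group G_X generated by pairs (x,y) ∈ X×X subject to the relations (x,x)=1, (x,y)(y,f^{-1}(x))=1, (x,y)=(x∗z, y∗z), (y,z)=(y∘x, z∘x), (x,z)=(x∗y, z∘y) for all x,y,z, the additional relation (x∘y, z∗y) = (x, z) holds for all x,y,z ∈ X. -/
/-- The relations of the group G_X: (x,x)=1, (x,y)(y,f⁻¹(x))=1,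
(x,y)=(x∗z,y∗z), (y,z)=(y∘x,z∘x), (x,z)=(x∗y,z∘y). -/
def biqRels {X : Type*} (ast circ : X → X → X) (finv : X → X) :
    Set (FreeGroup (X × X)) :=
  {r | (∃ x, r = FreeGroup.of (x, x)) ∨
       (∃ x y, r = FreeGroup.of (x, y) * FreeGroup.of (y, finv x)) ∨
       (∃ x y z, r = FreeGroup.of (x, y) * (FreeGroup.of (ast x z, ast y z))⁻¹) ∨
       (∃ x y z, r = FreeGroup.of (y, z) * (FreeGroup.of (circ y x, circ z x))⁻¹) ∨
       (∃ x y z, r = FreeGroup.of (x, z) * (FreeGroup.of (ast x y, circ z y))⁻¹)}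

/-- The group G_X associated to a biquandle structure and (the inverse of) an
automorphism. -/
def GX {X : Type*} (ast circ : X → X → X) (finv : X → X) : Type _ :=
  PresentedGroup (biqRels ast circ finv)

instance {X : Type*} (ast circ : X → X → X) (finv : X → X) :
    Group (GX ast circ finv) := by unfold GX; infer_instance

/-- The generator of G_X corresponding to the pair (x,y). -/
def gen {X : Type*} (ast circ : X → X → X) (finv : X → X) (x y : X) :
    GX ast circ finv :=
  PresentedGroup.of (x, y)

lemma gen_of_rel {X : Type*} (ast circ : X → X → X) (finv : X → X)
    {a b c d : X}
    (h : FreeGroup.of (a, b) * (FreeGroup.of (c, d))⁻¹ ∈ biqRels ast circ finv) :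
    gen ast circ finv a b = gen ast circ finv c d := by
  have h1 : ((QuotientGroup.mk (FreeGroup.of (a, b) * (FreeGroup.of (c, d))⁻¹) :
      PresentedGroup (biqRels ast circ finv))) = 1 :=
    (QuotientGroup.eq_one_iff _).mpr (Subgroup.subset_normalClosure h)
  have h2 : gen ast circ finv a b * (gen ast circ finv c d)⁻¹ = 1 := by
    exact h1
  exact mul_inv_eq_one.mp h2

lemma gen_rel3 {X : Type*} (ast circ : X → X → X) (finv : X → X) (x y z : X) :
    gen ast circ finv x y = gen ast circ finv (ast x z) (ast y z) :=
  gen_of_rel ast circ finv (Or.inr (Or.inr (Or.inl ⟨x, y, z, rfl⟩)))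

lemma gen_rel4 {X : Type*} (ast circ : X → X → X) (finv : X → X) (x y z : X) :
    gen ast circ finv y z = gen ast circ finv (circ y x) (circ z x) :=
  gen_of_rel ast circ finv (Or.inr (Or.inr (Or.inr (Or.inl ⟨x, y, z, rfl⟩))))

lemma gen_rel5 {X : Type*} (ast circ : X → X → X) (finv : X → X) (x y z : X) :
    gen ast circ finv x z = gen ast circ finv (ast x y) (circ z y) :=
  gen_of_rel ast circ finv (Or.inr (Or.inr (Or.inr (Or.inr ⟨x, y, z, rfl⟩))))

/-- In G_X the additional relation (x∘y, z∗y) = (x,z) holds. -/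
theorem gx_extra_relation {X : Type*} (B : Biquandle X) (f : X ≃ X)
    (hast : ∀ x y, f (B.ast x y) = B.ast (f x) (f y))
    (hcirc : ∀ x y, f (B.circ x y) = B.circ (f x) (f y))
    (hcond : ∀ x y, B.ast x y = B.circ x (f y)) :
    ∀ x y z : X,
      gen B.ast B.circ f.symm (B.circ x y) (B.ast z y) =
        gen B.ast B.circ f.symm x z := by
  intro x y z
  obtain ⟨a, ha⟩ := (B.ast_bij y).2 (B.circ x y)
  simp only at ha
  calc gen B.ast B.circ f.symm (B.circ x y) (B.ast z y)
      = gen B.ast B.circ f.symm (B.ast a y) (B.ast z y) := by rw [ha]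
    _ = gen B.ast B.circ f.symm a z := (gen_rel3 B.ast B.circ f.symm a z y).symm
    _ = gen B.ast B.circ f.symm (B.ast a y) (B.circ z y) := gen_rel5 B.ast B.circ f.symm a y z
    _ = gen B.ast B.circ f.symm (B.circ x y) (B.circ z y) := by rw [ha]
    _ = gen B.ast B.circ f.symm x z := (gen_rel4 B.ast B.circ f.symm y x z).symm
end

section
/- Let X = {1,2,3} be the biquandle from Example 2.4 (1∗1=2, 1∗2=2, 1∗3=1, 2∗1=1, 2∗2=1, 2∗3=2, 3∗y=3, ∘ = ∗) and f the automorphism with f(1)=2, f(2)=1, f(3)=3. Then the group G_X presented with generators (x,y) for x,y ∈ {1,2,3} and relations (x,x)=1, (x,y)(y,f^{-1}(x))=1, (x,y)=(x∗z,y∗z), (y,z)=(y∘x,z∘x), (x,z)=(x∗y,z∘y) is infinite cyclic, generated by a = (1,3) = (2,3). -/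
/-- The operation table of Example 2.4, on `Fin 3` (element `i` represents `i+1`). -/
def exOp : Fin 3 → Fin 3 → Fin 3
  | 0, 0 => 1 | 0, 1 => 1 | 0, 2 => 0
  | 1, 0 => 0 | 1, 1 => 0 | 1, 2 => 1
  | 2, _ => 2

section Aux

abbrev tbl : Fin 3 → Fin 3 → ℤ
  | 0, 2 => 1 | 1, 2 => 1 | 2, 0 => -1 | 2, 1 => -1 | _, _ => 0

def phi (p : Fin 3 × Fin 3) : Multiplicative ℤ := Multiplicative.ofAdd (tbl p.1 p.2)

def fex : Fin 3 → Fin 3 | 0 => 1 | 1 => 0 | 2 => 2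

lemma phi_rels : ∀ r ∈ biqRels exOp exOp fex, FreeGroup.lift phi r = 1 := by
  rintro r (⟨x, rfl⟩ | ⟨x, y, rfl⟩ | ⟨x, y, z, rfl⟩ | ⟨x, y, z, rfl⟩ | ⟨x, y, z, rfl⟩) <;>
      simp only [map_mul, map_inv, FreeGroup.lift_apply_of]
  · revert x; decide
  · revert x y; decide
  · revert x y z; decide
  · revert x y z; decide
  · revert x y z; decide

lemma rel_one (f : Fin 3 → Fin 3) (r : FreeGroup (Fin 3 × Fin 3))
    (hr : r ∈ biqRels exOp exOp f) : PresentedGroup.mk (biqRels exOp exOp f) r = 1 :=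
  (QuotientGroup.eq_one_iff r).mpr (Subgroup.subset_normalClosure hr)

lemma gen_mul (f : Fin 3 → Fin 3) (x y u v : Fin 3)
    (hr : FreeGroup.of (x, y) * FreeGroup.of (u, v) ∈ biqRels exOp exOp f) :
    gen exOp exOp f x y * gen exOp exOp f u v = 1 := by
  have := rel_one f _ hr
  rwa [map_mul] at this

lemma gen_eq (f : Fin 3 → Fin 3) (x y u v : Fin 3)
    (hr : FreeGroup.of (x, y) * (FreeGroup.of (u, v))⁻¹ ∈ biqRels exOp exOp f) :
    gen exOp exOp f x y = gen exOp exOp f u v := by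
  have := rel_one f _ hr
  rw [map_mul, map_inv, mul_inv_eq_one] at this
  exact this

lemma gen_diag (f : Fin 3 → Fin 3) (x : Fin 3) : gen exOp exOp f x x = 1 :=
  rel_one f _ (Or.inl ⟨x, rfl⟩)

end Aux

/-- For the biquandle of Example 2.4 and the automorphism f(1)=2, f(2)=1,
f(3)=3 (which is its own inverse), the group G_X is infinite cyclic, generated
by a = (1,3) = (2,3). -/
theorem gx_example_infinite_cyclic :
    ∀ f : Fin 3 → Fin 3, (f 0 = 1 ∧ f 1 = 0 ∧ f 2 = 2) →
      gen exOp exOp f 0 2 = gen exOp exOp f 1 2 ∧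
      ∃ e : GX exOp exOp f ≃* Multiplicative ℤ,
        e (gen exOp exOp f 0 2) = Multiplicative.ofAdd 1 := by
  rintro f ⟨h0, h1, h2⟩
  have hf : f = fex := by
    funext i; fin_cases i <;> simp [h0, h1, h2, fex]
  subst hf
  -- basic relations
  have e12 : gen exOp exOp fex 0 2 = gen exOp exOp fex 1 2 :=
    gen_eq fex 0 2 1 2 (Or.inr (Or.inr (Or.inl ⟨0, 2, 0, by norm_num [exOp]⟩)))
  refine ⟨e12, ?_⟩
  set a := gen exOp exOp fex 0 2 with ha
  have e01 : gen exOp exOp fex 0 1 = 1 := by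
    have h := gen_mul fex 0 1 1 1 (Or.inr (Or.inl ⟨0, 1, by norm_num [fex]⟩))
    rwa [gen_diag, mul_one] at h
  have e10 : gen exOp exOp fex 1 0 = 1 := by
    have h := gen_mul fex 1 0 0 0 (Or.inr (Or.inl ⟨1, 0, by norm_num [fex]⟩))
    rwa [gen_diag, mul_one] at h
  have e21 : gen exOp exOp fex 2 1 = a⁻¹ := by
    have h := gen_mul fex 0 2 2 1 (Or.inr (Or.inl ⟨0, 2, by norm_num [fex]⟩))
    rw [← ha] at h
    exact eq_inv_of_mul_eq_one_right h
  have e20 : gen exOp exOp fex 2 0 = a⁻¹ := by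
    have h := gen_mul fex 1 2 2 0 (Or.inr (Or.inl ⟨1, 2, by norm_num [fex]⟩))
    rw [← e12] at h
    exact eq_inv_of_mul_eq_one_right h
  -- the two homomorphisms
  let Φ : GX exOp exOp fex →* Multiplicative ℤ := PresentedGroup.toGroup phi_rels
  let Ψ : Multiplicative ℤ →* GX exOp exOp fex := zpowersHom _ a
  have hΦa : Φ a = Multiplicative.ofAdd 1 := PresentedGroup.toGroup.of phi_rels
  have hgen : ∀ x y : Fin 3, gen exOp exOp fex x y = a ^ (tbl x y) := by
    intro x y
    fin_cases x <;> fin_cases y <;>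
      simp [tbl, gen_diag, e01, e10, e12.symm, e21, e20, ← ha]
  have hΨΦ : Ψ.comp Φ = MonoidHom.id _ := by
    apply PresentedGroup.ext
    rintro ⟨x, y⟩
    show Ψ (Φ (gen exOp exOp fex x y)) = gen exOp exOp fex x y
    rw [hgen x y, map_zpow, hΦa, map_zpow]
    show (a ^ (1 : ℤ)) ^ tbl x y = _
    rw [zpow_one]
  have hΦΨ : Φ.comp Ψ = MonoidHom.id _ := by
    apply MonoidHom.ext_mint
    show Φ (Ψ (Multiplicative.ofAdd 1)) = Multiplicative.ofAdd 1
    show Φ (a ^ (1:ℤ)) = Multiplicative.ofAdd 1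
    rw [zpow_one, hΦa]
  exact ⟨MulEquiv.mk ⟨Φ, Ψ, fun x => congrFun (congrArg DFunLike.coe hΨΦ) x,
    fun x => congrFun (congrArg DFunLike.coe hΦΨ) x⟩ (map_mul Φ), hΦa⟩
end

section
/- In any biquandle X, the diagonal map x ↦ x∗x = x∘x is a bijection from X to X. -/
/-- If `y ∘ x = x ∗ y`, then `x = y`. -/
lemma Biquandle.eq_of_circ_eq_ast {X : Type*} (B : Biquandle X) {x y : X}
    (h : B.circ y x = B.ast x y) : x = y := by
  -- From ex1 and injectivity of right circ-translation by c := x∗y: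
  have hc : ∀ z, B.circ z y = B.circ z x := by
    intro z
    have h1 := B.ex1 x y z
    rw [h] at h1
    exact (B.circ_bij (B.ast x y)).1 h1
  -- From ex3 and injectivity of right ast-translation by c:
  have ha : ∀ a, B.ast a x = B.ast a y := by
    intro a
    have h3 := B.ex3 a x y
    rw [h] at h3
    exact (B.ast_bij (B.ast x y)).1 h3
  -- Now S(x,x) = S(x,y), so x = y.
  have hxx : B.circ x x = B.circ y x := by
    rw [← B.diag x, ha x, ← h]
  have hxy : B.ast x x = B.ast x y := ha x
  have : ((x, x) : X × X) = (x, y) := by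
    apply B.S_bij.1
    simp only [Prod.mk.injEq]
    exact ⟨hxx, hxy⟩
  exact congrArg Prod.snd this

/-- In any biquandle, the diagonal map x ↦ x∗x (= x∘x) is a bijection. -/
theorem diagonal_bijective {X : Type*} (B : Biquandle X) :
    Function.Bijective (fun x => B.ast x x) := by
  constructor
  · intro a b hab
    simp only at hab
    have : ((a, a) : X × X) = (b, b) := by
      apply B.S_bij.1
      simp only [Prod.mk.injEq, ← B.diag]
      exact ⟨hab, hab⟩
    exact congrArg Prod.fst this
  · intro y
    obtain ⟨⟨a, b⟩, hp⟩ := B.S_bij.2 (y, y)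
    simp only [Prod.mk.injEq] at hp
    obtain ⟨h1, h2⟩ := hp
    have hab : a = b := B.eq_of_circ_eq_ast (h1.trans h2.symm)
    exact ⟨a, by simpa [hab] using h2⟩
end
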